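/- For every integer ℓ ≥ 1 there exist constants C > 0 and s₀ > 0 such that for all s ≥ s₀, | k_ℓ(s) − (e^s/(2 s^ℓ)) (1 − ℓ(ℓ−1)/(2s)) | ≤ C e^s s^{-ℓ - 2}; that is, k_ℓ(s) = (e^s/(2 s^ℓ))(1 − ℓ(ℓ−1)/(2s) + O(1/s²)) as s → ∞. -/

import Mathlib

open Real Set Filter
open scoped Nat Topology

noncomputable section

/-- The even-dimensional kernel `k_ℓ(s) = Σ_{j=0}^∞ s^{2j+1}/((2(j+ℓ))‼ (2j+1)‼)`. -/
def kEven (ℓ : ℕ) (s : ℝ) : ℝ :=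
  ∑' j : ℕ, s ^ (2 * j + 1) / (((2 * (j + ℓ))‼ : ℝ) * (((2 * j + 1)‼ : ℝ)))

/-!
With `m = 2j + 1` one has `(2(j+ℓ))‼ (2j+1)‼ = m! (m+1)(m+3)⋯(m+2ℓ-1)`, so `k_ℓ(s)` is the odd
part of the exponential series with weights `1/((m+1)(m+3)⋯(m+2ℓ-1))`. Expanding to second order
in `1/m`, these weights agree with `m!/(m+ℓ)! - (ℓ(ℓ-1)/2) m!/(m+ℓ+1)!` up to `O(m^{-ℓ-2})`, the
two coefficients of `m^{-ℓ-1}` cancelling because `1 + 3 + ⋯ + (2ℓ-1) = (1 + 2 + ⋯ + ℓ) + ℓ(ℓ-1)/2`.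
The two comparison series are `s^{-ℓ}` and `s^{-ℓ-1}` times parity tails of `Σ sⁿ/n!`, each equal
to `e^s/2` up to a polynomial in `s`, and the remainder is `O(e^s s^{-ℓ-2})` because
`(m+ℓ+2)!/m! ≤ ((ℓ+3) m)^{ℓ+2}`.
-/

open Finset

theorem one_add_sum_le_prod_one_add {ι R : Type*} [CommSemiring R] [PartialOrder R]
    [IsOrderedRing R] (s : Finset ι) {f : ι → R} (hf : ∀ i ∈ s, 0 ≤ f i) :
    1 + ∑ i ∈ s, f i ≤ ∏ i ∈ s, (1 + f i) := by
  induction s using Finset.cons_induction with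
  | empty => simp
  | cons a s ha ih =>
    rw [forall_mem_cons] at hf
    have h1 : 1 ≤ ∏ i ∈ s, (1 + f i) :=
      (le_add_of_nonneg_right (sum_nonneg hf.2)).trans (ih hf.2)
    rw [sum_cons, prod_cons]
    calc 1 + (f a + ∑ i ∈ s, f i) = f a + (1 + ∑ i ∈ s, f i) := add_left_comm ..
      _ ≤ f a * ∏ i ∈ s, (1 + f i) + ∏ i ∈ s, (1 + f i) :=
        add_le_add (le_mul_of_one_le_right hf.1 h1) (ih hf.2)
      _ = (1 + f a) * ∏ i ∈ s, (1 + f i) := by ring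

theorem inv_prod_one_add_mem_Icc {ι : Type*} (s : Finset ι) {y : ι → ℝ} (hy : ∀ i, 0 ≤ y i) :
    (∏ i ∈ s, (1 + y i))⁻¹ ∈
      Icc (1 - ∑ i ∈ s, y i) (1 - ∑ i ∈ s, y i + (∑ i ∈ s, y i) ^ 2) := by
  set T := ∑ i ∈ s, y i
  have hT : 0 ≤ T := sum_nonneg fun i _ => hy i
  have hlow : 1 + T ≤ ∏ i ∈ s, (1 + y i) := one_add_sum_le_prod_one_add s fun i _ => hy i
  constructor
  · calc 1 - T ≤ exp (-T) := by linarith [add_one_le_exp (-T)]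
      _ = (exp T)⁻¹ := exp_neg T
      _ ≤ _ := inv_anti₀ (by linarith) (prod_one_add_le_exp_sum s hy)
  · calc (∏ i ∈ s, (1 + y i))⁻¹ ≤ (1 + T)⁻¹ := inv_anti₀ (by positivity) hlow
      _ ≤ 1 - T + T ^ 2 := by
        rw [inv_le_iff_one_le_mul₀ (by positivity)]
        nlinarith [pow_nonneg hT 3]

theorem abs_inv_prod_add_sub_le {ι : Type*} (s : Finset ι) {a : ι → ℝ} (ha : ∀ i, 0 ≤ a i)
    {x : ℝ} (hx : 0 < x) :
    |(∏ i ∈ s, (x + a i))⁻¹ - (1 - (∑ i ∈ s, a i) / x) / x ^ #s|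
      ≤ (∑ i ∈ s, a i) ^ 2 / x ^ (#s + 2) := by
  have hprod : ∏ i ∈ s, (x + a i) = x ^ #s * ∏ i ∈ s, (1 + a i / x) := by
    rw [← prod_const, ← prod_mul_distrib]
    exact prod_congr rfl fun i _ => by field_simp
  set T := (∑ i ∈ s, a i) / x
  have hT : T = ∑ i ∈ s, a i / x := sum_div ..
  obtain ⟨hlo, hhi⟩ := inv_prod_one_add_mem_Icc s fun i => div_nonneg (ha i) hx.le
  rw [← hT] at hlo hhi
  have hrhs : (∑ i ∈ s, a i) ^ 2 / x ^ (#s + 2) = T ^ 2 / x ^ #s := by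
    simp only [T, div_pow, pow_add]; field_simp
  have hxn : 0 < x ^ #s := by positivity
  rw [hprod, hrhs, mul_inv, inv_mul_eq_div, ← sub_div, abs_div, abs_of_pos hxn]
  gcongr
  exact abs_le.2 ⟨by linarith, by linarith⟩

def risingProd (d : ℝ) (n : ℕ) (x : ℝ) : ℝ := ∏ i ∈ range n, (x + (1 + d * i))

theorem sum_range_one_add_mul (d : ℝ) (n : ℕ) :
    ∑ i ∈ range n, (1 + d * i) = n + d * (n * (n - 1) / 2) := by
  induction n with
  | zero => simp
  | succ n ih => rw [sum_range_succ, ih]; push_cast; ring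

theorem abs_inv_risingProd_sub_le {d : ℝ} (hd : 0 ≤ d) (n : ℕ) {x : ℝ} (hx : 0 < x) :
    |(risingProd d n x)⁻¹ - (1 - (n + d * (n * (n - 1) / 2)) / x) / x ^ n|
      ≤ (n + d * (n * (n - 1) / 2)) ^ 2 / x ^ (n + 2) := by
  simpa [risingProd, sum_range_one_add_mul] using
    abs_inv_prod_add_sub_le (range n) (a := fun i : ℕ => 1 + d * i) (fun i => by positivity) hx

theorem abs_sub_add_sub_le (a b c d : ℝ) : |a - b + c - d| ≤ |a| + |b| + |c| + |d| := by
  rw [abs_le]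
  constructor <;>
    linarith [neg_abs_le a, le_abs_self a, neg_abs_le b, le_abs_self b, neg_abs_le c,
      le_abs_self c, neg_abs_le d, le_abs_self d]

theorem exists_abs_inv_risingProd_combination_le (ℓ : ℕ) : ∃ D : ℝ, ∀ x : ℝ, 1 ≤ x →
    |(risingProd 2 ℓ x)⁻¹ - (risingProd 1 ℓ x)⁻¹ + ℓ * (ℓ - 1) / 2 * (risingProd 1 (ℓ + 1) x)⁻¹|
      ≤ D / x ^ (ℓ + 2) := by
  set Q : ℝ := ℓ * (ℓ - 1) / 2
  set A : ℝ := ℓ + 2 * Q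
  set B : ℝ := ℓ + 1 * Q
  set C : ℝ := (ℓ + 1 : ℕ) + 1 * ((ℓ + 1 : ℕ) * ((ℓ + 1 : ℕ) - 1) / 2)
  have hC : 0 ≤ C := by simp only [C]; push_cast; ring_nf; positivity
  refine ⟨A ^ 2 + B ^ 2 + |Q| * C ^ 2 + |Q| * C, fun x hx => ?_⟩
  have hx0 : 0 < x := one_pos.trans_le hx
  have hu : |(risingProd 2 ℓ x)⁻¹ - (1 - A / x) / x ^ ℓ| ≤ A ^ 2 / x ^ (ℓ + 2) :=
    abs_inv_risingProd_sub_le zero_le_two ℓ hx0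
  have hv : |(risingProd 1 ℓ x)⁻¹ - (1 - B / x) / x ^ ℓ| ≤ B ^ 2 / x ^ (ℓ + 2) :=
    abs_inv_risingProd_sub_le zero_le_one ℓ hx0
  have hw : |Q * ((risingProd 1 (ℓ + 1) x)⁻¹ - (1 - C / x) / x ^ (ℓ + 1))|
      ≤ |Q| * (C ^ 2 / x ^ (ℓ + 2)) := by
    rw [abs_mul]
    gcongr
    exact (abs_inv_risingProd_sub_le zero_le_one (ℓ + 1) hx0).trans <|
      div_le_div_of_nonneg_left (sq_nonneg C) (by positivity) (pow_le_pow_right₀ hx (by omega))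
  have hcorr : |Q * C / x ^ (ℓ + 2)| = |Q| * (C / x ^ (ℓ + 2)) := by
    rw [mul_div_assoc, abs_mul, abs_of_nonneg (div_nonneg hC (by positivity))]
  have hmain : (1 - A / x) / x ^ ℓ - (1 - B / x) / x ^ ℓ + Q * ((1 - C / x) / x ^ (ℓ + 1))
      = -(Q * C / x ^ (ℓ + 2)) := by
    simp only [A, B, C, Q]; push_cast; field_simp; ring
  calc _ = |((risingProd 2 ℓ x)⁻¹ - (1 - A / x) / x ^ ℓ)
        - ((risingProd 1 ℓ x)⁻¹ - (1 - B / x) / x ^ ℓ)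
        + Q * ((risingProd 1 (ℓ + 1) x)⁻¹ - (1 - C / x) / x ^ (ℓ + 1)) - Q * C / x ^ (ℓ + 2)| := by
        congr 1; linear_combination hmain
    _ ≤ A ^ 2 / x ^ (ℓ + 2) + B ^ 2 / x ^ (ℓ + 2) + |Q| * (C ^ 2 / x ^ (ℓ + 2))
        + |Q| * (C / x ^ (ℓ + 2)) := by
        grw [abs_sub_add_sub_le, hu, hv, hw, hcorr]
    _ = _ := by ring

theorem doubleFactorial_mul_doubleFactorial_eq (ℓ j : ℕ) :
    ((2 * (j + ℓ))‼ : ℝ) * (2 * j + 1)‼ = (2 * j + 1)! * risingProd 2 ℓ (2 * j + 1 : ℕ) := by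
  induction ℓ with
  | zero =>
    rw [risingProd, prod_range_zero, mul_one, add_zero, Nat.factorial_eq_mul_doubleFactorial,
      mul_comm]
    push_cast; ring
  | succ ℓ ih =>
    rw [show 2 * (j + (ℓ + 1)) = 2 * (j + ℓ) + 2 by ring, Nat.doubleFactorial_add_two, risingProd,
      prod_range_succ, ← risingProd]
    push_cast at ih ⊢
    linear_combination (2 * ((j : ℝ) + ℓ) + 2) * ih

theorem factorial_add_eq_mul_risingProd (m n : ℕ) : ((m + n)! : ℝ) = m ! * risingProd 1 n m := by
  induction n with
  | zero => simp [risingProd]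
  | succ n ih =>
    rw [← add_assoc, Nat.factorial_succ, risingProd, prod_range_succ, ← risingProd]
    push_cast
    linear_combination ((m : ℝ) + n + 1) * ih

theorem one_le_risingProd {d : ℝ} (hd : 0 ≤ d) (n : ℕ) {x : ℝ} (hx : 0 ≤ x) :
    1 ≤ risingProd d n x :=
  Finset.one_le_prod fun i _ => by nlinarith [(Nat.cast_nonneg i : (0 : ℝ) ≤ i)]

theorem summable_pow_div_factorial_comp {e : ℕ → ℕ} (he : e.Injective) (s : ℝ) :
    Summable fun j => s ^ e j / (e j)! :=
  (Real.summable_pow_div_factorial s).comp_injective he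

theorem tsum_pow_div_factorial_comp_le_exp {e : ℕ → ℕ} (he : e.Injective) {s : ℝ} (hs : 0 ≤ s) :
    ∑' j, s ^ e j / (e j)! ≤ exp s := by
  rw [Real.exp_eq_exp_ℝ, ← (NormedSpace.expSeries_div_hasSum_exp s).tsum_eq]
  exact tsum_comp_le_tsum_of_inj (Real.summable_pow_div_factorial s) (fun n => by positivity) he

def expParityTail (c : ℕ) (s : ℝ) : ℝ := ∑' j : ℕ, s ^ (2 * j + c) / (2 * j + c)!

theorem summable_expParityTail (c : ℕ) (s : ℝ) :
    Summable fun j : ℕ => s ^ (2 * j + c) / (2 * j + c)! :=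
  summable_pow_div_factorial_comp (fun a b h => by omega) s

theorem expParityTail_zero (s : ℝ) : expParityTail 0 s = cosh s := by
  simpa [expParityTail] using (Real.hasSum_cosh s).tsum_eq

theorem expParityTail_one (s : ℝ) : expParityTail 1 s = sinh s :=
  (Real.hasSum_sinh s).tsum_eq

theorem expParityTail_eq_add (c : ℕ) (s : ℝ) :
    expParityTail c s = s ^ c / c ! + expParityTail (c + 2) s := by
  rw [expParityTail, (summable_expParityTail c s).tsum_eq_zero_add, expParityTail]
  simp only [mul_zero, zero_add, mul_add]
  congr 2 with j
  ring_nf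

theorem abs_expParityTail_sub_le (c : ℕ) {s : ℝ} (hs : 1 ≤ s) :
    |expParityTail c s - exp s / 2| ≤ (c + 1) * s ^ c := by
  have hs0 : 0 ≤ s := zero_le_one.trans hs
  have hexp : exp (-s) / 2 ≤ 1 / 2 := by
    linarith [exp_le_one_iff.2 (by linarith : -s ≤ 0)]
  induction c using Nat.twoStepInduction with
  | zero =>
    rw [expParityTail_zero, cosh_eq, abs_of_nonneg (by ring_nf; positivity)]
    simp only [CharP.cast_eq_zero, zero_add, pow_zero, one_mul]
    linarith
  | one =>
    rw [expParityTail_one, sinh_eq, abs_sub_comm, abs_of_nonneg (by ring_nf; positivity)]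
    push_cast
    linarith
  | more c ih _ =>
    have hstep : expParityTail (c + 2) s - exp s / 2
        = (expParityTail c s - exp s / 2) - s ^ c / c ! := by
      rw [expParityTail_eq_add c s]; ring
    have hterm₀ : 0 ≤ s ^ c / c ! := by positivity
    have hterm : s ^ c / c ! ≤ s ^ c := div_le_self (by positivity) (mod_cast c.factorial_pos)
    have hpow : s ^ c ≤ s ^ (c + 2) := pow_le_pow_right₀ hs (by omega)
    calc |expParityTail (c + 2) s - exp s / 2| ≤ |expParityTail c s - exp s / 2| + s ^ c / c ! := by
          rw [hstep]; exact (abs_sub _ _).trans_eq (by rw [abs_of_nonneg hterm₀])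
      _ ≤ (c + 1) * s ^ c + s ^ c := add_le_add ih hterm
      _ ≤ ((c + 2 : ℕ) + 1) * s ^ (c + 2) := by push_cast; nlinarith [pow_nonneg hs0 c]

def oddExpSum (w : ℕ → ℝ) (s : ℝ) : ℝ := ∑' j : ℕ, s ^ (2 * j + 1) / (2 * j + 1)! * w (2 * j + 1)

theorem summable_odd_mul {w : ℕ → ℝ} {B : ℝ} (hw : ∀ m, |w m| ≤ B) (s : ℝ) :
    Summable fun j : ℕ => s ^ (2 * j + 1) / (2 * j + 1)! * w (2 * j + 1) := by
  refine Summable.of_norm_bounded ((summable_expParityTail 1 |s|).mul_right B) fun j => ?_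
  rw [norm_mul, norm_div, norm_pow, Real.norm_eq_abs, Real.norm_eq_abs, Nat.abs_cast]
  exact mul_le_mul_of_nonneg_left (hw _) (by positivity)

theorem factorial_add_le_factorial_mul_pow {m : ℕ} (hm : 1 ≤ m) (k : ℕ) :
    (m + k)! ≤ m ! * ((k + 1) * m) ^ k := by
  rw [← Nat.factorial_mul_ascFactorial]
  gcongr
  exact (Nat.ascFactorial_le_pow_add m k).trans (Nat.pow_le_pow_left (by nlinarith) k)

theorem pow_div_factorial_div_pow_le {m : ℕ} (hm : 1 ≤ m) (k : ℕ) {s : ℝ} (hs : 0 < s) :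
    s ^ m / m ! / m ^ k ≤ (k + 1) ^ k / s ^ k * (s ^ (m + k) / (m + k)!) := by
  have h : ((m + k)! : ℝ) ≤ m ! * (((k : ℝ) + 1) * m) ^ k :=
    mod_cast factorial_add_le_factorial_mul_pow hm k
  rw [pow_add, div_div, div_mul_div_comm, div_le_div_iff₀ (by positivity) (by positivity)]
  calc s ^ m * (s ^ k * (m + k)!) ≤ s ^ m * (s ^ k * (m ! * (((k : ℝ) + 1) * m) ^ k)) := by gcongr
    _ = _ := by rw [mul_pow]; ring

theorem abs_oddExpSum_le {w : ℕ → ℝ} {D : ℝ} (k : ℕ) (hw : ∀ m, 1 ≤ m → |w m| ≤ D / m ^ k)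
    {s : ℝ} (hs : 0 < s) :
    |oddExpSum w s| ≤ D * (k + 1) ^ k / s ^ k * exp s := by
  have hD : 0 ≤ D := by simpa using (abs_nonneg (w 1)).trans (hw 1 le_rfl)
  set c : ℝ := D * (k + 1) ^ k / s ^ k
  have hterm : ∀ j : ℕ, ‖s ^ (2 * j + 1) / (2 * j + 1)! * w (2 * j + 1)‖
      ≤ c * (s ^ (2 * j + (k + 1)) / (2 * j + (k + 1))!) := fun j => by
    rw [Real.norm_eq_abs, abs_mul, abs_of_nonneg (by positivity)]
    calc s ^ (2 * j + 1) / (2 * j + 1)! * |w (2 * j + 1)|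
        ≤ s ^ (2 * j + 1) / (2 * j + 1)! * (D / (2 * j + 1 : ℕ) ^ k) := by
          gcongr; exact hw _ (by omega)
      _ = D * (s ^ (2 * j + 1) / (2 * j + 1)! / (2 * j + 1 : ℕ) ^ k) := by ring
      _ ≤ D * ((k + 1) ^ k / s ^ k * (s ^ (2 * j + 1 + k) / (2 * j + 1 + k)!)) := by
          gcongr; exact pow_div_factorial_div_pow_le (by omega) k hs
      _ = c * (s ^ (2 * j + (k + 1)) / (2 * j + (k + 1))!) := by
          rw [show 2 * j + 1 + k = 2 * j + (k + 1) by ring]; ring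
  calc _ ≤ c * expParityTail (k + 1) s :=
        tsum_of_norm_bounded ((summable_expParityTail (k + 1) s).hasSum.mul_left c) hterm
    _ ≤ c * exp s := by
        gcongr
        exact tsum_pow_div_factorial_comp_le_exp (fun a b h => by omega) hs.le

theorem abs_inv_risingProd_le_one {d : ℝ} (hd : 0 ≤ d) (n : ℕ) {x : ℝ} (hx : 0 ≤ x) :
    |(risingProd d n x)⁻¹| ≤ 1 := by
  have h := one_le_risingProd hd n hx
  rw [abs_inv, abs_of_pos (one_pos.trans_le h)]
  exact inv_le_one_of_one_le₀ h

theorem summable_odd_mul_inv_risingProd {d : ℝ} (hd : 0 ≤ d) (n : ℕ) (s : ℝ) :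
    Summable fun j : ℕ => s ^ (2 * j + 1) / (2 * j + 1)! * (risingProd d n (2 * j + 1 : ℕ))⁻¹ :=
  summable_odd_mul (w := fun m : ℕ => (risingProd d n m)⁻¹)
    (fun m => abs_inv_risingProd_le_one hd n m.cast_nonneg) s

theorem kEven_eq_oddExpSum (ℓ : ℕ) (s : ℝ) :
    kEven ℓ s = oddExpSum (fun m => (risingProd 2 ℓ m)⁻¹) s :=
  tsum_congr fun j => by
    rw [doubleFactorial_mul_doubleFactorial_eq, ← div_div, div_eq_mul_inv (_ / _)]

theorem oddExpSum_inv_risingProd_one (n : ℕ) {s : ℝ} (hs : s ≠ 0) :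
    oddExpSum (fun m => (risingProd 1 n m)⁻¹) s = expParityTail (n + 1) s / s ^ n := by
  rw [expParityTail, ← tsum_div_const]
  refine tsum_congr fun j => ?_
  rw [show 2 * j + (n + 1) = 2 * j + 1 + n by ring, factorial_add_eq_mul_risingProd (2 * j + 1) n,
    pow_add s (2 * j + 1) n]
  field_simp

theorem kEven_sub_eq (ℓ : ℕ) {s : ℝ} (hs : s ≠ 0) :
    kEven ℓ s - exp s / (2 * s ^ ℓ) * (1 - ℓ * (ℓ - 1) / (2 * s)) =
      (expParityTail (ℓ + 1) s - exp s / 2) / s ^ ℓ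
        - ℓ * (ℓ - 1) / 2 * ((expParityTail (ℓ + 2) s - exp s / 2) / s ^ (ℓ + 1))
        + oddExpSum (fun m => (risingProd 2 ℓ m)⁻¹ - (risingProd 1 ℓ m)⁻¹
            + ℓ * (ℓ - 1) / 2 * (risingProd 1 (ℓ + 1) m)⁻¹) s := by
  have hsplit : oddExpSum (fun m => (risingProd 2 ℓ m)⁻¹) s =
      oddExpSum (fun m => (risingProd 1 ℓ m)⁻¹) s
        - ℓ * (ℓ - 1) / 2 * oddExpSum (fun m => (risingProd 1 (ℓ + 1) m)⁻¹) s
        + oddExpSum (fun m => (risingProd 2 ℓ m)⁻¹ - (risingProd 1 ℓ m)⁻¹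
            + ℓ * (ℓ - 1) / 2 * (risingProd 1 (ℓ + 1) m)⁻¹) s := by
    have hu := summable_odd_mul_inv_risingProd zero_le_two ℓ s
    have hv := summable_odd_mul_inv_risingProd zero_le_one ℓ s
    have hw := (summable_odd_mul_inv_risingProd zero_le_one (ℓ + 1) s).mul_left
      ((ℓ : ℝ) * (ℓ - 1) / 2)
    simp only [oddExpSum]
    rw [← tsum_mul_left, ← hv.tsum_sub hw,
      ← (hv.sub hw).tsum_add (((hu.sub hv).add hw).congr fun j => by ring)]
    congr with j
    ring
  rw [kEven_eq_oddExpSum, hsplit, oddExpSum_inv_risingProd_one ℓ hs,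
    oddExpSum_inv_risingProd_one (ℓ + 1) hs]
  field_simp
  ring

theorem isBigO_self_exp_div_pow (k : ℕ) : (fun s : ℝ => s) =O[atTop] fun s => exp s / s ^ k := by
  refine Asymptotics.IsBigO.of_bound ((k + 1)! : ℝ) ?_
  filter_upwards [eventually_gt_atTop 0] with s hs
  have h := pow_div_factorial_le_exp s hs.le (k + 1)
  rw [div_le_iff₀ (by positivity), pow_succ'] at h
  rw [Real.norm_eq_abs, Real.norm_eq_abs, abs_of_pos hs, abs_of_pos (by positivity), mul_div_assoc',
    le_div_iff₀ (by positivity)]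
  linarith

theorem expParityTail_sub_div_pow_isBigO (n : ℕ) :
    (fun s => (expParityTail (n + 1) s - exp s / 2) / s ^ n) =O[atTop] fun s => s := by
  refine Asymptotics.IsBigO.of_bound (n + 2) ?_
  filter_upwards [eventually_ge_atTop 1] with s hs
  have hs0 : 0 < s := one_pos.trans_le hs
  rw [norm_div, norm_pow, Real.norm_eq_abs, Real.norm_eq_abs, abs_of_pos hs0,
    div_le_iff₀ (by positivity)]
  calc _ ≤ ((n + 1 : ℕ) + 1) * s ^ (n + 1) := abs_expParityTail_sub_le (n + 1) hs
    _ = (n + 2) * s * s ^ n := by push_cast; ring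

theorem kEven_sub_isBigO (ℓ : ℕ) :
    (fun s => kEven ℓ s - exp s / (2 * s ^ ℓ) * (1 - ℓ * (ℓ - 1) / (2 * s)))
      =O[atTop] fun s => exp s / s ^ (ℓ + 2) := by
  obtain ⟨D, hD⟩ := exists_abs_inv_risingProd_combination_le ℓ
  have htail (n : ℕ) : (fun s => (expParityTail (n + 1) s - exp s / 2) / s ^ n)
      =O[atTop] fun s => exp s / s ^ (ℓ + 2) :=
    (expParityTail_sub_div_pow_isBigO n).trans (isBigO_self_exp_div_pow _)
  have hrem : (fun s => oddExpSum (fun m => (risingProd 2 ℓ m)⁻¹ - (risingProd 1 ℓ m)⁻¹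
      + ℓ * (ℓ - 1) / 2 * (risingProd 1 (ℓ + 1) m)⁻¹) s)
      =O[atTop] fun s => exp s / s ^ (ℓ + 2) := by
    refine Asymptotics.IsBigO.of_bound (D * (ℓ + 3) ^ (ℓ + 2)) ?_
    filter_upwards [eventually_gt_atTop 0] with s hs
    rw [Real.norm_eq_abs, Real.norm_eq_abs, abs_of_pos (by positivity : 0 < exp s / s ^ (ℓ + 2))]
    calc _ ≤ D * ((ℓ + 2 : ℕ) + 1) ^ (ℓ + 2) / s ^ (ℓ + 2) * exp s :=
          abs_oddExpSum_le (ℓ + 2) (fun m hm => hD m (by exact_mod_cast hm)) hs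
      _ = _ := by push_cast; ring
  refine (((htail ℓ).sub ((htail (ℓ + 1)).const_mul_left ((ℓ : ℝ) * (ℓ - 1) / 2))).add
    hrem).congr' ?_ EventuallyEq.rfl
  filter_upwards [eventually_ne_atTop 0] with s hs
  exact (kEven_sub_eq ℓ hs).symm

theorem exists_pos_forall_abs_le_of_isBigO {f g : ℝ → ℝ} (h : f =O[atTop] g) :
    ∃ C > 0, ∃ s₀ > 0, ∀ s, s₀ ≤ s → |f s| ≤ C * |g s| := by
  obtain ⟨C, hC, hCw⟩ := h.exists_pos
  obtain ⟨s₀, hs₀⟩ := eventually_atTop.1 hCw.bound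
  exact ⟨C, hC, max s₀ 1, by positivity, fun s hs => hs₀ s (le_of_max_le_left hs)⟩

theorem kEven_asymptotic_general (ℓ : ℕ) :
    ∃ C > (0 : ℝ), ∃ s₀ > (0 : ℝ), ∀ s : ℝ, s₀ ≤ s →
      |kEven ℓ s - (exp s / (2 * s ^ ℓ)) * (1 - (ℓ : ℝ) * ((ℓ : ℝ) - 1) / (2 * s))|
        ≤ C * exp s * s ^ (-(ℓ : ℝ) - 2) := by
  obtain ⟨C, hC, s₀, hs₀, hbound⟩ := exists_pos_forall_abs_le_of_isBigO (kEven_sub_isBigO ℓ)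
  refine ⟨C, hC, s₀, hs₀, fun s hs => (hbound s hs).trans_eq ?_⟩
  have hs0 : 0 < s := hs₀.trans_le hs
  rw [abs_of_pos (by positivity), show -(ℓ : ℝ) - 2 = -((ℓ + 2 : ℕ) : ℝ) by push_cast; ring,
    rpow_neg hs0.le, rpow_natCast]
  ring

/-- For each integer `ℓ ≥ 1`,
`k_ℓ(s) = (e^s/(2s^ℓ))(1 − ℓ(ℓ−1)/(2s) + O(1/s²))` as `s → ∞`; explicitly, there are
`C > 0`, `s₀ > 0` with
`|k_ℓ(s) − (e^s/(2s^ℓ))(1 − ℓ(ℓ−1)/(2s))| ≤ C e^s s^{-ℓ-2}` for all `s ≥ s₀`. -/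
theorem kEven_asymptotic (ℓ : ℕ) (hℓ : 1 ≤ ℓ) :
    ∃ C > (0 : ℝ), ∃ s₀ > (0 : ℝ), ∀ s : ℝ, s₀ ≤ s →
      |kEven ℓ s - (exp s / (2 * s ^ ℓ)) * (1 - (ℓ : ℝ) * ((ℓ : ℝ) - 1) / (2 * s))|
        ≤ C * exp s * s ^ (-(ℓ : ℝ) - 2) :=
  kEven_asymptotic_general ℓ
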